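/- arXiv:math/0703763 — 7 statements merged into one kernel-verified Lean document; each statement's English description precedes it below -/
import Mathlib

section
/- Every middle-exact functor between abelian categories is additive, where a functor T is middle-exact if for every short exact sequence 0 → A → B → C → 0 the sequence T(A) → T(B) → T(C) is exact. -/
/-!
Applied to `0 → 0 → 0 → 0`, middle-exactness makes `T 0 → T 0 → T 0` (two identities) exact, so
`𝟙 (T 0) = 0` and `T` preserves zero morphisms. For a biproduct `A ⊞ B`, the image of the split
sequence `A → A ⊞ B → B` is exact, `T inl` has the retraction `T fst` and `T snd` the section
`T inr`; the splitting this produces forces `T fst ≫ T inl + T snd ≫ T inr = 𝟙`, so `T` preserves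
binary biproducts and is therefore additive.
-/

open CategoryTheory Limits

universe v₁ v₂ u₁ u₂

namespace CategoryTheory

namespace Limits.BinaryBicone

variable {C : Type u₁} [Category.{v₁} C]

abbrev shortComplex [HasZeroMorphisms C] {X Y : C} (b : BinaryBicone X Y) : ShortComplex C :=
  ShortComplex.mk b.inl b.snd b.inl_snd

variable [Preadditive C] {X Y : C}

def splittingOfTotal (b : BinaryBicone X Y) (total : b.fst ≫ b.inl + b.snd ≫ b.inr = 𝟙 b.pt) :
    b.shortComplex.Splitting where
  r := b.fst
  s := b.inr
  f_r := b.inl_fst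
  s_g := b.inr_snd
  id := total

lemma IsBilimit.shortExact [HasZeroObject C] {b : BinaryBicone X Y} (hb : b.IsBilimit) :
    b.shortComplex.ShortExact :=
  (b.splittingOfTotal (Limits.IsBilimit.binary_total hb)).shortExact

lemma total_of_exact [Balanced C] (b : BinaryBicone X Y) (hb : b.shortComplex.Exact) :
    b.fst ≫ b.inl + b.snd ≫ b.inr = 𝟙 b.pt := by
  let s := ShortComplex.Splitting.ofExactOfRetraction _ hb b.fst b.inl_fst inferInstance
  have hs_id : b.fst ≫ b.inl + b.snd ≫ s.s = 𝟙 b.pt := s.id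
  -- the section of a splitting with retraction `b.fst` is forced to be `b.inr`
  have hs : s.s = b.inr := by simpa using b.inr ≫= hs_id
  rwa [← hs]

end Limits.BinaryBicone

namespace Functor

variable {C : Type u₁} {D : Type u₂} [Category.{v₁} C] [Category.{v₂} D]

def IsMiddleExact [HasZeroMorphisms C] [HasZeroMorphisms D] (T : C ⥤ D) : Prop :=
  ∀ S : ShortComplex C, S.ShortExact →
    ∃ w : T.map S.f ≫ T.map S.g = 0, (ShortComplex.mk (T.map S.f) (T.map S.g) w).Exact

variable {T : C ⥤ D}

open ZeroObject in
lemma IsMiddleExact.preservesZeroMorphisms [HasZeroMorphisms C] [HasZeroObject C]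
    [HasZeroMorphisms D] [HasZeroObject D] (hT : T.IsMiddleExact) : T.PreservesZeroMorphisms := by
  have hS : (ShortComplex.mk (0 : (0 : C) ⟶ 0) (0 : (0 : C) ⟶ 0) comp_zero).ShortExact :=
    { exact := ShortComplex.exact_of_isZero_X₂ _ (isZero_zero C)
      mono_f := (isZero_zero C).mono _
      epi_g := (isZero_zero C).epi _ }
  obtain ⟨w, -⟩ := hT _ hS
  have : IsZero (T.obj 0) := by
    rw [IsZero.iff_id_eq_zero]
    simpa only [← id_zero, T.map_id, Category.comp_id] using w
  exact preservesZeroMorphisms_of_map_zero_object this.isoZero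

lemma IsMiddleExact.preservesBinaryBiproducts [Preadditive C] [HasZeroObject C] [Preadditive D]
    [Balanced D] [T.PreservesZeroMorphisms] (hT : T.IsMiddleExact) :
    PreservesBinaryBiproducts T where
  preserves {_ _} := ⟨fun {b} hb => by
    obtain ⟨_, hexact⟩ := hT _ hb.shortExact
    exact ⟨isBinaryBilimitOfTotal _ ((T.mapBinaryBicone b).total_of_exact hexact)⟩⟩

end Functor

end CategoryTheory

/-- **Middle-exact functors are additive.**
A functor `T` between abelian categories is *middle-exact* if for every short exact
sequence `0 → A → B → C → 0`, the (not a priori zero-composable, but in fact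
zero-composable) sequence `T(A) → T(B) → T(C)` is exact.  Every middle-exact
functor is additive. -/
theorem middleExact_functor_additive {C : Type u₁} {D : Type u₂}
    [Category.{v₁} C] [Category.{v₂} D] [Abelian C] [Abelian D] (T : C ⥤ D)
    (hT : ∀ S : ShortComplex C, S.ShortExact →
      ∃ w : T.map S.f ≫ T.map S.g = 0, (ShortComplex.mk (T.map S.f) (T.map S.g) w).Exact) :
    T.Additive := by
  have hT : T.IsMiddleExact := hT
  have := hT.preservesZeroMorphisms
  have := hT.preservesBinaryBiproducts
  exact T.additive_of_preservesBinaryBiproducts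
end

section
/- Every generator in the category of right R-modules is completely faithful, i.e., if U is a generator of Mod-R, then for every left R-module M and every nonzero m ∈ M there exists u ∈ U with u ⊗ m ≠ 0 in U ⊗_R M. -/
/-!
`U ⊗ M → R ⊗ M ≅ M`, `u ⊗ m ↦ φ u • m`, shows that `u ⊗ m = 0` forces `φ u • m = 0` for every
functional `φ : U → R`. Since `U` generates, `R` is a quotient of some `ι →₀ U`, so `1` is a finite
sum of values `φ_i (u_i)`; if every `u ⊗ m` vanishes, then `m = 1 • m = ∑ φ_i (u_i) • m = 0`.
-/

open TensorProduct

universe u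

section

variable {R U M : Type*} [CommSemiring R] [AddCommMonoid U] [Module R U]
  [AddCommMonoid M] [Module R M]

theorem LinearMap.smul_eq_zero_of_tmul_eq_zero (φ : U →ₗ[R] R) {u : U} {m : M}
    (h : u ⊗ₜ[R] m = 0) : φ u • m = 0 := by
  simpa using congr_arg (TensorProduct.lid R M ∘ φ.rTensor M) h

theorem eq_zero_of_forall_smul_eq_zero_of_surjective {ι : Type*} {p : (ι →₀ U) →ₗ[R] R}
    (hp : Function.Surjective p) {m : M} (h : ∀ (φ : U →ₗ[R] R) (u : U), φ u • m = 0) :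
    m = 0 := by
  obtain ⟨f, hf⟩ := hp 1
  calc m = p f • m := by rw [hf, one_smul]
    _ = ∑ i ∈ f.support, (p ∘ₗ Finsupp.lsingle i) (f i) • m := by
      conv_lhs => rw [← Finsupp.sum_single f]
      rw [map_finsuppSum, Finsupp.sum, Finset.sum_smul]
      rfl
    _ = 0 := Finset.sum_eq_zero fun i _ => h _ _

end

/-- **Every generator of `Mod-R` is completely faithful.**
If `U` is a generator of the category of `R`-modules (every module is a quotient of a
direct sum of copies of `U`), then for every `R`-module `M` and every nonzero `m ∈ M`
there exists `u ∈ U` with `u ⊗ m ≠ 0` in `U ⊗[R] M`. -/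
theorem generator_completely_faithful
    {R : Type u} [CommRing R] (U : Type u) [AddCommGroup U] [Module R U]
    (hU : ∀ (M : Type u) [AddCommGroup M] [Module R M],
      ∃ (ι : Type u) (p : (ι →₀ U) →ₗ[R] M), Function.Surjective p)
    (M : Type u) [AddCommGroup M] [Module R M] (m : M) (hm : m ≠ 0) :
    ∃ u : U, u ⊗ₜ[R] m ≠ 0 := by
  by_contra! h
  obtain ⟨ι, p, hp⟩ := hU R
  exact hm <| eq_zero_of_forall_smul_eq_zero_of_surjective hp fun φ u =>
    φ.smul_eq_zero_of_tmul_eq_zero (h u)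
end

section
/- Let S : C → D be a functor between Grothendieck categories with a right adjoint T that is exact and preserves coproducts. Then S preserves finitely generated objects. In particular, any Frobenius functor between Grothendieck categories preserves finitely generated objects. -/
open CategoryTheory Limits CompleteLattice

universe v u₁ u₂

/-- An object of a category is *finitely generated* if the top element of its
lattice of subobjects is a compact element, i.e. the lattice of subobjects is
compact. -/
def CategoryTheory.FGObject {C : Type u₁} [Category.{v} C] [Abelian C] [HasLimits C]
    [HasColimits C] [WellPowered.{v} C] (X : C) : Prop :=
  IsCompactElement (⊤ : Subobject X)

noncomputable instance FGProofAux.subobjectCompleteLatticeV {C : Type u₁} [Category.{v} C] [Abelian C]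
    [HasLimits C] [HasColimits C] [WellPowered.{v} C] {B : C} :
    CompleteLattice (Subobject B) :=
  Subobject.instCompleteLattice.{v}

instance FGProofAux.smallSubobjectV {C : Type u₁} [Category.{v} C] [Abelian C]
    [HasLimits C] [HasColimits C] [WellPowered.{v} C] {B : C} :
    Small.{v} (Subobject B) :=
  inferInstance

noncomputable instance FGProofAux.subobjectCompleteSemilatticeSupV {C : Type u₁} [Category.{v} C]
    [Abelian C] [HasLimits C] [HasColimits C] [WellPowered.{v} C] {B : C} :
    CompleteSemilatticeSup (Subobject B) :=
  Subobject.completeSemilatticeSup.{v}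

namespace FGProofAux

variable {C : Type u₁} [Category.{v} C]

section Helpers

variable [Abelian C] [HasLimits C] [HasColimits C] [WellPowered.{v} C]

/-- If an epimorphism factors through a subobject, the subobject is everything. -/
lemma eq_top_of_epi_factors {X W : C} (P : Subobject X) (g : W ⟶ X) (hg : Epi g)
    (h : P.Factors g) : P = ⊤ := by
  have hfac : P.factorThru g h ≫ P.arrow = g := P.factorThru_arrow g h
  haveI : Epi g := hg
  haveI : Epi P.arrow := epi_of_epi_fac hfac
  haveI : IsIso P.arrow := isIso_of_mono_of_epi _
  exact Subobject.eq_top_of_isIso_arrow P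

lemma epi_smallCoproductDesc_of_sSup_eq_top {Y : C} (s : Set (Subobject Y))
    (h : sSup s = ⊤) : Epi (Subobject.smallCoproductDesc.{v} s) := by
  have e : sSup s = Subobject.mk (image.ι (Subobject.smallCoproductDesc.{v} s)) := rfl
  rw [e] at h
  haveI : IsIso (image.ι (Subobject.smallCoproductDesc.{v} s)) :=
    (Subobject.isIso_iff_mk_eq_top _).mpr h
  have hfac : factorThruImage (Subobject.smallCoproductDesc.{v} s) ≫
      image.ι (Subobject.smallCoproductDesc.{v} s) = Subobject.smallCoproductDesc.{v} s := image.fac _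
  rw [← hfac]
  exact epi_comp _ _

end Helpers

section PullbackFactors

variable [HasPullbacks C]

lemma factors_of_pullback_obj_eq_top {X Y : C} (g : X ⟶ Y) (P : Subobject Y)
    (h : (Subobject.pullback g).obj P = ⊤) : P.Factors g := by
  revert h
  induction P using Subobject.ind with
  | h f =>
    intro h
    have e : (Subobject.pullback g).obj (Subobject.mk f) = Subobject.mk (pullback.snd f g) := rfl
    rw [e, ← Subobject.isIso_iff_mk_eq_top] at h
    refine (Subobject.mk_factors_iff f g).mpr ⟨inv (pullback.snd f g) ≫ pullback.fst f g, ?_⟩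
    simp [pullback.condition]

lemma pullback_obj_factors {W X Y : C} (g : X ⟶ Y) (P : Subobject Y) (u : W ⟶ X)
    (h : P.Factors (u ≫ g)) : ((Subobject.pullback g).obj P).Factors u := by
  revert h
  induction P using Subobject.ind with
  | h f =>
    intro h
    obtain ⟨k, hk⟩ := (Subobject.mk_factors_iff f (u ≫ g)).mp h
    have e : (Subobject.pullback g).obj (Subobject.mk f) = Subobject.mk (pullback.snd f g) := rfl
    rw [e]
    exact (Subobject.mk_factors_iff _ u).mpr ⟨pullback.lift k u hk, pullback.lift_snd _ _ _⟩

lemma factors_of_le {W X : C} {P Q : Subobject X} (u : W ⟶ X) (h : P ≤ Q)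
    (hP : P.Factors u) : Q.Factors u :=
  (Subobject.factors_iff _ _).mpr
    ⟨P.factorThru u hP ≫ Subobject.ofLE P Q h, by simp⟩

end PullbackFactors

end FGProofAux

namespace FGProofAux2
open FGProofAux

variable {C : Type u₁} [Category.{v} C]
variable [Abelian C] [HasLimits C] [HasColimits C] [WellPowered.{v} C]

lemma sSup_mk_map_eq_top {D : Type u₂} [Category.{v} D]
    [Abelian D] [HasLimits D] [HasColimits D] [WellPowered.{v} D]
    (T : D ⥤ C) [T.PreservesEpimorphisms] [T.PreservesMonomorphisms]
    [∀ J : Type v, PreservesColimitsOfShape (Discrete J) T] {Y : D}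
    (s : Set (Subobject Y)) (htop : sSup s = ⊤) :
    sSup ((fun A : Subobject Y => Subobject.mk (T.map A.arrow)) '' s) = ⊤ := by
  haveI hw : Epi (Subobject.smallCoproductDesc.{v} s) :=
    epi_smallCoproductDesc_of_sSup_eq_top s htop
  haveI : Epi (T.map (Subobject.smallCoproductDesc.{v} s)) := T.map_epi _
  let fam : ↥(equivShrink (Subobject Y) '' s) → D :=
    fun j => (((equivShrink (Subobject Y)).symm j : Subobject Y) : D)
  let E : (∐ fun j => T.obj (fam j)) ⟶ T.obj Y :=
    sigmaComparison T fam ≫ T.map (Subobject.smallCoproductDesc.{v} s)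
  haveI : Epi E := epi_comp _ _
  set R := sSup ((fun A : Subobject Y => Subobject.mk (T.map A.arrow)) '' s) with hR
  have hcomp : ∀ j, Sigma.ι (fun j => T.obj (fam j)) j ≫ E =
      T.map (((equivShrink (Subobject Y)).symm j : Subobject Y)).arrow := by
    intro j
    simp only [E, ι_comp_sigmaComparison_assoc, ← T.map_comp]
    congr 1
    simp [Subobject.smallCoproductDesc]
    erw [Sigma.ι_desc]
  have hmem : ∀ j : ↥(equivShrink (Subobject Y) '' s),
      ((equivShrink (Subobject Y)).symm j : Subobject Y) ∈ s := by
    intro j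
    obtain ⟨a, ha, hav⟩ := j.2
    simpa [← hav] using ha
  have hfac : ∀ j : ↥(equivShrink (Subobject Y) '' s), R.Factors
      (T.map (((equivShrink (Subobject Y)).symm j : Subobject Y)).arrow) := by
    intro j
    refine factors_of_le _ (le_sSup ?_) (Subobject.mk_factors_self _)
    exact ⟨((equivShrink (Subobject Y)).symm j : Subobject Y), hmem j, rfl⟩
  have hfacE : R.Factors E := by
    refine (Subobject.factors_iff _ _).mpr
      ⟨Sigma.desc (fun j => R.factorThru _ (hfac j)), ?_⟩
    ext j
    simp [hcomp j]
  exact eq_top_of_epi_factors R E inferInstance hfacE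

end FGProofAux2

namespace FGProofAux3
open FGProofAux

variable {C : Type u₁} [Category.{v} C]

lemma isIso_colimit_const_desc {J : Type v} [SmallCategory J] [IsFiltered J]
    [HasColimitsOfShape J C] (Z : C) :
    IsIso (colimit.desc ((Functor.const J).obj Z)
      { pt := Z, ι := { app := fun _ => 𝟙 Z } }) := by
  obtain ⟨j₀⟩ := IsFiltered.nonempty (C := J)
  have hι : ∀ j : J, (colimit.ι ((Functor.const J).obj Z) j : Z ⟶ _) =
      colimit.ι ((Functor.const J).obj Z) j₀ := by
    intro j
    have h1 := colimit.w ((Functor.const J).obj Z) (IsFiltered.leftToMax j j₀)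
    have h2 := colimit.w ((Functor.const J).obj Z) (IsFiltered.rightToMax j j₀)
    simp only [Functor.const_obj_map, Category.id_comp] at h1 h2
    rw [← h1, h2]
  refine ⟨(colimit.ι ((Functor.const J).obj Z) j₀ : Z ⟶ _), ?_, by simp⟩
  ext j
  rw [colimit.ι_desc_assoc]
  dsimp
  rw [Category.id_comp, Category.comp_id, hι j]

variable [Abelian C] [HasLimits C] [HasColimits C] [WellPowered.{v} C] [AB5 C]

set_option maxHeartbeats 1000000 in
lemma exists_factors_of_directed_sSup_eq_top
    {X Y : C} (hX : IsCompactElement (⊤ : Subobject X)) (f : X ⟶ Y)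
    (s : Set (Subobject Y)) (hne : s.Nonempty) (hdir : DirectedOn (· ≤ ·) s)
    (htop : sSup s = ⊤) : ∃ A ∈ s, A.Factors f := by
  classical
  let e := equivShrink (Subobject Y)
  let J : Type v := ↥(e '' s)
  letI : Preorder J := Preorder.lift (fun j : J => e.symm j.1)
  have hmem : ∀ j : J, (e.symm j.1 : Subobject Y) ∈ s := by
    intro j
    obtain ⟨a, ha, hav⟩ := j.2
    simpa [← hav] using ha
  haveI : IsDirected J (· ≤ ·) := ⟨fun j k => by
    obtain ⟨z, hz, h1, h2⟩ := hdir _ (hmem j) _ (hmem k)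
    refine ⟨⟨e z, ⟨z, hz, rfl⟩⟩, ?_, ?_⟩
    · show e.symm j.1 ≤ e.symm (e z); simpa using h1
    · show e.symm k.1 ≤ e.symm (e z); simpa using h2⟩
  haveI : Nonempty J := ⟨⟨e hne.choose, ⟨hne.choose, hne.choose_spec, rfl⟩⟩⟩
  let m : J → Subobject Y := fun j => e.symm j.1
  have hm : Monotone m := fun _ _ h => h
  let F : J ⥤ C := hm.functor ⋙ Subobject.underlying
  let α : F ⟶ (Functor.const J).obj Y :=
    { app := fun j => (m j).arrow
      naturality := fun j k φ => by
        dsimp [F]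
        simp
        exact Subobject.underlying_arrow _ }
  let β : (Functor.const J).obj X ⟶ (Functor.const J).obj Y := (Functor.const J).map f
  haveI hw : Epi (Subobject.smallCoproductDesc.{v} s) :=
    epi_smallCoproductDesc_of_sSup_eq_top s htop
  let κY := colimit.desc ((Functor.const J).obj Y) { pt := Y, ι := { app := fun _ => 𝟙 Y } }
  let κX := colimit.desc ((Functor.const J).obj X) { pt := X, ι := { app := fun _ => 𝟙 X } }
  haveI : IsIso κY := isIso_colimit_const_desc Y
  haveI : IsIso κX := isIso_colimit_const_desc X
  have hcfac : Sigma.desc (fun j : J => colimit.ι F j) ≫ (colim.map α ≫ κY) =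
      Subobject.smallCoproductDesc.{v} s := by
    ext j
    simp [κY, α, Subobject.smallCoproductDesc]
    erw [Sigma.ι_desc]
    exact Category.comp_id _
  haveI : Epi (colim.map α ≫ κY) := @epi_of_epi_fac _ _ _ _ _ _ _ _ hw hcfac
  haveI : Epi (colim.map α) := by
    have h : (colim.map α ≫ κY) ≫ inv κY = colim.map α := by simp
    rw [← h]
    exact epi_comp _ _
  haveI : Epi (pullback.snd (colim.map α) (colim.map β)) := inferInstance
  haveI : PreservesFiniteLimits (colim (J := J) (C := C)) := HasExactColimitsOfShape.preservesFiniteLimits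
  let Q := pullback α β
  let E : colim.obj Q ⟶ X := colim.map (pullback.snd α β) ≫ κX
  have hE : (PreservesPullback.iso colim α β).hom ≫
      pullback.snd (colim.map α) (colim.map β) ≫ κX = E := by
    rw [← Category.assoc, PreservesPullback.iso_hom_snd]
  haveI : Epi (pullback.snd (colim.map α) (colim.map β) ≫ κX) := epi_comp _ _
  haveI : Epi E := by
    rw [← hE]
    exact epi_comp _ _
  set R := sSup ((fun A : Subobject Y => (Subobject.pullback f).obj A) '' s) with hRdef
  have hcond : ∀ j : J, (pullback.fst α β).app j ≫ (m j).arrow =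
      (pullback.snd α β).app j ≫ f := by
    intro j
    have h := NatTrans.congr_app (pullback.condition (f := α) (g := β)) j
    simpa [α, β] using h
  have hlegfac : ∀ j : J, R.Factors ((pullback.snd α β).app j) := by
    intro j
    refine factors_of_le _ (le_sSup ⟨m j, hmem j, rfl⟩) ?_
    exact pullback_obj_factors f (m j) _
      ((Subobject.factors_iff _ _).mpr ⟨(pullback.fst α β).app j, hcond j⟩)
  have hnat : ∀ {j k : J} (φ : j ⟶ k),
      Q.map φ ≫ (pullback.snd α β).app k = (pullback.snd α β).app j := by
    intro j k φ
    have h := (pullback.snd α β).naturality φ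
    simpa using h
  let coc : Cocone Q :=
    { pt := (R : C)
      ι := { app := fun j => R.factorThru _ (hlegfac j)
             naturality := fun j k φ => by
               rw [← cancel_mono R.arrow]
               simp [hnat φ] } }
  have hdesc : colimit.desc Q coc ≫ R.arrow = E := by
    ext j
    simp [coc, E, κX]
  have hRtop : R = ⊤ :=
    eq_top_of_epi_factors R E inferInstance
      ((Subobject.factors_iff _ _).mpr ⟨colimit.desc Q coc, hdesc⟩)
  rw [isCompactElement_iff_le_of_directed_sSup_le] at hX
  obtain ⟨P, ⟨A, hA, hAP⟩, hle⟩ := hX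
    ((fun A : Subobject Y => (Subobject.pullback f).obj A) '' s)
    ⟨_, ⟨hne.choose, hne.choose_spec, rfl⟩⟩
    (by
      rintro _ ⟨a, ha, rfl⟩ _ ⟨b, hb, rfl⟩
      obtain ⟨z, hz, h1, h2⟩ := hdir a ha b hb
      exact ⟨_, ⟨z, hz, rfl⟩, (Subobject.pullback f).monotone h1,
        (Subobject.pullback f).monotone h2⟩)
    (le_of_eq (by rw [← hRdef, hRtop]))
  subst hAP
  exact ⟨A, hA, factors_of_pullback_obj_eq_top f A (top_le_iff.mp hle)⟩

end FGProofAux3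

namespace FGMain
open FGProofAux FGProofAux2 FGProofAux3

lemma part1 {C : Type u₁} {D : Type u₂} [Category.{v} C] [Category.{v} D]
    [Abelian C] [HasLimits C] [HasColimits C] [AB5 C] [WellPowered.{v} C]
    [Abelian D] [HasLimits D] [HasColimits D] [AB5 D] [WellPowered.{v} D]
    (S : C ⥤ D) (T : D ⥤ C) (adj : S ⊣ T)
    (h1 : Nonempty (PreservesFiniteLimits T)) (h2 : Nonempty (PreservesFiniteColimits T))
    (h3 : ∀ J : Type v, Nonempty (PreservesColimitsOfShape (Discrete J) T))
    (X : C) (hX : FGObject X) : FGObject (S.obj X) := by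
  haveI := h2.some
  haveI := fun J : Type v => (h3 J).some
  haveI : T.IsRightAdjoint := adj.isRightAdjoint
  haveI : T.PreservesMonomorphisms := inferInstance
  haveI : T.PreservesEpimorphisms := inferInstance
  rw [CategoryTheory.FGObject, isCompactElement_iff_le_of_directed_sSup_le]
  intro s hne hdir hle
  have htop : sSup s = ⊤ := top_le_iff.mp hle
  have htop2 : sSup ((fun A : Subobject (S.obj X) =>
      Subobject.mk (T.map A.arrow)) '' s) = ⊤ :=
    sSup_mk_map_eq_top T s htop
  have hmono : Monotone (fun A : Subobject (S.obj X) => Subobject.mk (T.map A.arrow)) := by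
    intro A B h
    exact Subobject.mk_le_mk_of_comm (T.map (Subobject.ofLE A B h))
      (by rw [← T.map_comp, Subobject.ofLE_arrow])
  obtain ⟨A', hA', hfac⟩ := exists_factors_of_directed_sSup_eq_top hX
    (adj.unit.app X) _ (hne.image _)
    (by
      rintro _ ⟨a, ha, rfl⟩ _ ⟨b, hb, rfl⟩
      obtain ⟨z, hz, hz1, hz2⟩ := hdir a ha b hb
      exact ⟨_, ⟨z, hz, rfl⟩, hmono hz1, hmono hz2⟩) htop2
  obtain ⟨A, hA, rfl⟩ := hA'
  obtain ⟨v, hv0⟩ : ∃ v : X ⟶ T.obj (A : D), v ≫ T.map A.arrow = adj.unit.app X :=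
    (Subobject.mk_factors_iff _ _).mp hfac
  have hv : v ≫ T.map A.arrow = adj.unit.app X := hv0
  refine ⟨A, hA, ?_⟩
  have hnat := adj.counit.naturality A.arrow
  dsimp at hnat
  have hsplit : (S.map v ≫ adj.counit.app ((A : D))) ≫ A.arrow = 𝟙 (S.obj X) := by
    rw [Category.assoc, ← hnat, ← Category.assoc, ← S.map_comp, hv]
    exact adj.left_triangle_components X
  haveI : Epi A.arrow := epi_of_epi_fac hsplit
  haveI : IsIso A.arrow := isIso_of_mono_of_epi _
  exact le_of_eq (Subobject.eq_top_of_isIso_arrow A).symm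

end FGMain

/-- Let `S : C ⥤ D` be a functor between Grothendieck categories having a right
adjoint `T` which is exact and preserves coproducts.  Then `S` preserves finitely
generated objects.  In particular, any Frobenius functor between Grothendieck
categories preserves finitely generated objects. -/
theorem leftAdjoint_preserves_finitelyGenerated
    {C : Type u₁} {D : Type u₂} [Category.{v} C] [Category.{v} D]
    [Abelian C] [HasLimits C] [HasColimits C] [AB5 C] [WellPowered.{v} C]
    [Abelian D] [HasLimits D] [HasColimits D] [AB5 D] [WellPowered.{v} D]
    (hGC : ∃ G : C, IsSeparator G) (hGD : ∃ G : D, IsSeparator G) :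
    (∀ (S : C ⥤ D) (T : D ⥤ C), (S ⊣ T) →
      Nonempty (PreservesFiniteLimits T) → Nonempty (PreservesFiniteColimits T) →
      (∀ J : Type v, Nonempty (PreservesColimitsOfShape (Discrete J) T)) →
      ∀ X : C, FGObject X → FGObject (S.obj X)) ∧
    (∀ (S : C ⥤ D) (T : D ⥤ C), (S ⊣ T) → (T ⊣ S) →
      ∀ X : C, FGObject X → FGObject (S.obj X)) := by
  constructor
  · intro S T adj h1 h2 h3 X hX
    exact FGMain.part1 S T adj h1 h2 h3 X hX
  · intro S T adj1 adj2 X hX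
    haveI : PreservesLimitsOfSize.{v, v} T := adj1.rightAdjoint_preservesLimits
    haveI : PreservesColimitsOfSize.{v, v} T := adj2.leftAdjoint_preservesColimits
    exact FGMain.part1 S T adj1 ⟨inferInstance⟩ ⟨inferInstance⟩
      (fun J => ⟨inferInstance⟩) X hX
end

section
/- Let (S, T, η, ε) be an adjunction between abelian categories where D has enough injectives. If there exists an object N of D such that T(N) is a cogenerator of C, then S is faithful. Conversely, if S is faithful and N is a cogenerator of D, then T(N) is a cogenerator of C. Consequently, S is faithful if and only if T preserves cogenerator objects. -/
open CategoryTheory Limits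

universe v₁ v₂ u₁ u₂

namespace CategoryTheory.Adjunction

variable {C : Type u₁} {D : Type u₂} [Category.{v₁} C] [Category.{v₂} D]
  {S : C ⥤ D} {T : D ⥤ C}

lemma map_comp_eq_map_comp_iff (adj : S ⊣ T) {X Y : C} {N : D} (f g : X ⟶ Y)
    (h : S.obj Y ⟶ N) :
    S.map f ≫ h = S.map g ≫ h ↔ f ≫ adj.homEquiv Y N h = g ≫ adj.homEquiv Y N h := by
  rw [← adj.homEquiv_naturality_left, ← adj.homEquiv_naturality_left,
    (adj.homEquiv X N).apply_eq_iff_eq]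

lemma faithful_of_isCoseparator_obj (adj : S ⊣ T) {N : D} (hN : IsCoseparator (T.obj N)) :
    S.Faithful where
  map_injective {X Y} {f g} hfg := hN.def f g fun h => by
    obtain ⟨h, rfl⟩ := (adj.homEquiv Y N).surjective h
    exact (adj.map_comp_eq_map_comp_iff f g h).1 (by rw [hfg])

lemma isCoseparator_obj_of_faithful (adj : S ⊣ T) [S.Faithful] {N : D}
    (hN : IsCoseparator N) : IsCoseparator (T.obj N) :=
  (isCoseparator_def _).2 fun _ _ f g hfg =>
    S.map_injective (hN.def _ _ fun h => (adj.map_comp_eq_map_comp_iff f g h).2 (hfg _))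

end CategoryTheory.Adjunction

theorem faithful_iff_rightAdjoint_preserves_cogenerators_general
    {C : Type u₁} {D : Type u₂} [Category.{v₁} C] [Category.{v₂} D]
    (hD : ∃ Q : D, IsCoseparator Q)
    (S : C ⥤ D) (T : D ⥤ C) (adj : S ⊣ T) :
    ((∃ N : D, IsCoseparator (T.obj N)) → S.Faithful) ∧
    (S.Faithful → ∀ N : D, IsCoseparator N → IsCoseparator (T.obj N)) ∧
    (S.Faithful ↔ ∀ N : D, IsCoseparator N → IsCoseparator (T.obj N)) := by
  have faithful : (∃ N : D, IsCoseparator (T.obj N)) → S.Faithful :=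
    fun ⟨_, hN⟩ => adj.faithful_of_isCoseparator_obj hN
  have preserves : S.Faithful → ∀ N : D, IsCoseparator N → IsCoseparator (T.obj N) :=
    fun _ _ hN => adj.isCoseparator_obj_of_faithful hN
  obtain ⟨Q, hQ⟩ := hD
  exact ⟨faithful, preserves, preserves, fun h => faithful ⟨Q, h Q hQ⟩⟩

/-- Let `(S, T)` be an adjunction between abelian categories where `D` has a
cogenerator and enough injectives.  If there is an object `N` of `D` with
`T(N)` a cogenerator of `C`, then `S` is faithful.  Conversely, if `S` is
faithful and `N` is a cogenerator of `D`, then `T(N)` is a cogenerator of `C`.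
Consequently, `S` is faithful if and only if `T` preserves cogenerators. -/
theorem faithful_iff_rightAdjoint_preserves_cogenerators
    {C : Type u₁} {D : Type u₂} [Category.{v₁} C] [Category.{v₂} D]
    [Abelian C] [Abelian D] [EnoughInjectives D]
    (hD : ∃ Q : D, IsCoseparator Q)
    (S : C ⥤ D) (T : D ⥤ C) (adj : S ⊣ T) :
    ((∃ N : D, IsCoseparator (T.obj N)) → S.Faithful) ∧
    (S.Faithful → ∀ N : D, IsCoseparator N → IsCoseparator (T.obj N)) ∧
    (S.Faithful ↔ ∀ N : D, IsCoseparator N → IsCoseparator (T.obj N)) :=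
  faithful_iff_rightAdjoint_preserves_cogenerators_general hD S T adj
end

section
/- Let S : C → D be a functor between abelian categories with right adjoint T, where D has enough injectives and a generator. Then S is faithfully exact (faithful and exact) if and only if T preserves injective cogenerator objects. -/
open CategoryTheory Limits

universe v₁ v₂ u₁ u₂

/-- Let `S : C ⥤ D` be a functor between abelian categories with right adjoint
`T`, where `D` has a generator, arbitrary coproducts and enough injectives.
Then `S` is faithfully exact (faithful and exact) if and only if `T` preserves
injective cogenerator objects. -/
theorem faithfully_exact_iff_rightAdjoint_preserves_injective_cogenerators
    {C : Type u₁} {D : Type u₂} [Category.{v₁} C] [Category.{v₂} D]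
    [Abelian C] [Abelian D] [HasColimits D] [EnoughInjectives D]
    (hD : ∃ G : D, IsSeparator G)
    (S : C ⥤ D) (T : D ⥤ C) (adj : S ⊣ T) :
    (S.Faithful ∧ Nonempty (PreservesFiniteLimits S) ∧
        Nonempty (PreservesFiniteColimits S)) ↔
    (∀ Q : D, Injective Q → IsCoseparator Q →
        Injective (T.obj Q) ∧ IsCoseparator (T.obj Q)) := by
  constructor
  · rintro ⟨hfaith, ⟨hl⟩, ⟨hc⟩⟩ Q hQinj hQcos
    haveI := hl
    haveI := hQinj
    haveI : S.PreservesMonomorphisms :=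
      CategoryTheory.preservesMonomorphisms_of_preservesLimitsOfShape S
    refine ⟨Injective.injective_of_adjoint adj Q, ?_⟩
    rw [isCoseparator_def] at hQcos ⊢
    intro X Y f g hfg
    haveI := hfaith
    apply S.map_injective
    apply hQcos
    intro h
    have h1 := congrArg (adj.homEquiv X Q).symm (hfg (adj.homEquiv Y Q h))
    rwa [adj.homEquiv_naturality_left_symm, adj.homEquiv_naturality_left_symm,
      Equiv.symm_apply_apply] at h1
  · intro hT
    obtain ⟨G, hG⟩ := hD
    haveI : WellPowered.{v₂} D := wellPowered_of_isDetector G hG.isDetector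
    haveI : HasLimits D := hasLimits_of_hasColimits_of_isSeparating hG
    obtain ⟨Q, hQinj, hQcos⟩ := Abelian.has_injective_coseparator G hG
    obtain ⟨hTQinj, hTQcos⟩ := hT Q hQinj hQcos
    haveI : S.IsLeftAdjoint := ⟨T, ⟨adj⟩⟩
    haveI : PreservesColimits S := adj.leftAdjoint_preservesColimits
    haveI : PreservesFiniteColimits S := ⟨fun J _ _ => inferInstance⟩
    haveI : PreservesBinaryBiproducts S :=
      preservesBinaryBiproducts_of_preservesBinaryCoproducts S
    haveI : S.Additive := Functor.additive_of_preservesBinaryBiproducts S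
    have hfaith : S.Faithful := by
      refine ⟨fun {X Y} {f g} hfg => ?_⟩
      rw [isCoseparator_def] at hTQcos
      apply hTQcos
      intro h
      apply (adj.homEquiv X Q).symm.injective
      rw [adj.homEquiv_naturality_left_symm, adj.homEquiv_naturality_left_symm, hfg]
    haveI : S.PreservesMonomorphisms := by
      refine ⟨fun {X Y} m hm => ⟨fun {Z} a b hab => ?_⟩⟩
      rw [isCoseparator_def] at hQcos
      apply hQcos
      intro k
      haveI := hTQinj
      have hk : k = S.map m ≫ (adj.homEquiv Y Q).symm
          (Injective.factorThru (adj.homEquiv X Q k) m) := by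
        rw [← adj.homEquiv_naturality_left_symm, Injective.comp_factorThru,
          Equiv.symm_apply_apply]
      rw [hk, ← Category.assoc, ← Category.assoc, hab]
    have hlim : PreservesFiniteLimits S := by
      apply (S.preservesFiniteLimits_tfae.out 0 3).1
      intro Sc hSc
      haveI := hSc.epi_g
      haveI := hSc.mono_f
      exact ⟨hSc.exact.map_of_epi_of_preservesCokernel S inferInstance inferInstance,
        inferInstance⟩
    exact ⟨hfaith, ⟨hlim⟩, ⟨inferInstance⟩⟩
end

section
/- Rafael's theorem: let S : C → D be a functor with right adjoint T, with unit ζ : 1 → TS and counit ξ : ST → 1. Then S is a separable functor if and only if ζ splits, i.e., there is a natural transformation ζ' : TS → 1 with ζ'_C ∘ ζ_C = id_C for all C. Dually, T is separable if and only if ξ cosplits, i.e., there is ξ' : 1 → ST with ξ_D ∘ ξ'_D = id_D for all D. -/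
open CategoryTheory

universe v₁ v₂ u₁ u₂

/-- A functor `F : C ⥤ D` is *separable* if for all objects `X, Y` there are
maps `Φ : Hom_D(F X, F Y) → Hom_C(X, Y)` such that (SF1) `Φ (F.map f) = f` for
every morphism `f`, and (SF2) for every commutative square
`h ≫ F.map g = F.map f ≫ h'` in `D` one has `Φ h ≫ g = f ≫ Φ h'`. -/
def CategoryTheory.Functor.Separable {C : Type u₁} {D : Type u₂}
    [Category.{v₁} C] [Category.{v₂} D] (F : C ⥤ D) : Prop :=
  ∃ Φ : ∀ ⦃X Y : C⦄, (F.obj X ⟶ F.obj Y) → (X ⟶ Y),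
    (∀ ⦃X Y : C⦄ (f : X ⟶ Y), Φ (F.map f) = f) ∧
    (∀ ⦃X₁ X₁' X₂ X₂' : C⦄ (f : X₁ ⟶ X₁') (g : X₂ ⟶ X₂')
      (h : F.obj X₁ ⟶ F.obj X₂) (h' : F.obj X₁' ⟶ F.obj X₂'),
      h ≫ F.map g = F.map f ≫ h' → Φ h ≫ g = f ≫ Φ h')

/-!
Given a retraction `ζ'` of the unit, `Φ h := ζ_X ≫ T h ≫ ζ'_Y` satisfies (SF1) and (SF2).
Conversely `ζ'_X := Φ (ξ_{S X})` is natural and retracts the unit, both by instances of (SF2)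
(the second via the triangle identity). The statement for the right adjoint `T` is the one for
the left adjoint `T.op ⊣ S.op`, since separability is self-dual.
-/

namespace CategoryTheory

variable {C : Type u₁} {D : Type u₂} [Category.{v₁} C] [Category.{v₂} D]

namespace Functor

theorem Separable.op {F : C ⥤ D} (hF : F.Separable) : F.op.Separable := by
  obtain ⟨Φ, hΦ_map, hΦ_nat⟩ := hF
  refine ⟨fun _ _ h => (Φ h.unop).op, fun _ _ f => Quiver.Hom.unop_inj (hΦ_map f.unop), ?_⟩
  intro _ _ _ _ f g h h' hsq
  exact Quiver.Hom.unop_inj (hΦ_nat g.unop f.unop h'.unop h.unop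
    (congrArg Quiver.Hom.unop hsq).symm).symm

theorem Separable.of_op {F : C ⥤ D} (hF : F.op.Separable) : F.Separable := by
  obtain ⟨Φ, hΦ_map, hΦ_nat⟩ := hF
  refine ⟨fun _ _ h => (Φ h.op).unop,
    fun _ _ f => Quiver.Hom.op_inj (hΦ_map f.op), ?_⟩
  intro _ _ _ _ f g h h' hsq
  exact Quiver.Hom.op_inj (hΦ_nat g.op f.op h'.op h.op
    (congrArg Quiver.Hom.op hsq).symm).symm

theorem separable_op_iff (F : C ⥤ D) : F.op.Separable ↔ F.Separable :=
  ⟨Separable.of_op, Separable.op⟩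

end Functor

namespace Adjunction

variable {S : C ⥤ D} {T : D ⥤ C} (adj : S ⊣ T)

theorem separable_left_of_unit_retraction (ζ' : S ⋙ T ⟶ 𝟭 C)
    (hζ' : ∀ X, adj.unit.app X ≫ ζ'.app X = 𝟙 X) : S.Separable := by
  refine ⟨fun X Y h => adj.unit.app X ≫ T.map h ≫ ζ'.app Y, fun X Y f => ?_, ?_⟩
  · dsimp only
    rw [reassoc_of% (adj.unit_naturality f), hζ', Category.comp_id]
  · intro X₁ X₁' X₂ X₂' f g h h' hsq
    have hζ'_nat : ζ'.app X₂ ≫ g = T.map (S.map g) ≫ ζ'.app X₂' := (ζ'.naturality g).symm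
    calc (adj.unit.app X₁ ≫ T.map h ≫ ζ'.app X₂) ≫ g
        = adj.unit.app X₁ ≫ T.map (h ≫ S.map g) ≫ ζ'.app X₂' := by
          simp only [Category.assoc, hζ'_nat, Functor.map_comp]
      _ = adj.unit.app X₁ ≫ T.map (S.map f ≫ h') ≫ ζ'.app X₂' := by rw [hsq]
      _ = f ≫ adj.unit.app X₁' ≫ T.map h' ≫ ζ'.app X₂' := by
          rw [Functor.map_comp, Category.assoc, reassoc_of% (adj.unit_naturality f)]

theorem exists_unit_retraction_of_separable_left (hS : S.Separable) :
    ∃ ζ' : S ⋙ T ⟶ 𝟭 C, ∀ X, adj.unit.app X ≫ ζ'.app X = 𝟙 X := by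
  obtain ⟨Φ, hΦ_map, hΦ_nat⟩ := hS
  have hΦ_id (X : C) : Φ (𝟙 (S.obj X)) = 𝟙 X := by simpa using hΦ_map (𝟙 X)
  refine ⟨{ app := fun X => Φ (adj.counit.app (S.obj X)), naturality := fun X Y f => ?_ },
    fun X => ?_⟩
  · exact (hΦ_nat ((S ⋙ T).map f) f _ _ (adj.counit.naturality (S.map f)).symm).symm
  · simpa [hΦ_id] using (hΦ_nat (adj.unit.app X) (𝟙 X) (𝟙 _) _ (by simp)).symm

theorem separable_left_iff :
    S.Separable ↔ ∃ ζ' : S ⋙ T ⟶ 𝟭 C, ∀ X, adj.unit.app X ≫ ζ'.app X = 𝟙 X :=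
  ⟨adj.exists_unit_retraction_of_separable_left,
    fun ⟨ζ', hζ'⟩ => adj.separable_left_of_unit_retraction ζ' hζ'⟩

theorem separable_right_iff :
    T.Separable ↔ ∃ ξ' : 𝟭 D ⟶ T ⋙ S, ∀ Y, ξ'.app Y ≫ adj.counit.app Y = 𝟙 Y := by
  rw [← T.separable_op_iff, adj.op.separable_left_iff]
  constructor
  · rintro ⟨ζ', hζ'⟩
    exact ⟨NatTrans.removeOp (F := T ⋙ S) (G := 𝟭 D) ζ',
      fun Y => Quiver.Hom.op_inj (hζ' (.op Y))⟩
  · rintro ⟨ξ', hξ'⟩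
    exact ⟨NatTrans.op ξ', fun Y => Quiver.Hom.unop_inj (hξ' Y.unop)⟩

end Adjunction

end CategoryTheory

/-- **Rafael's theorem.**  Let `S ⊣ T` be an adjunction with unit `ζ` and
counit `ξ`.  Then `S` is separable if and only if the unit splits (there is a
natural transformation `ζ' : TS ⟶ 1` with `ζ' ∘ ζ = id`), and `T` is separable
if and only if the counit cosplits (there is `ξ' : 1 ⟶ ST` with
`ξ ∘ ξ' = id`). -/
theorem rafael_separability
    {C : Type u₁} {D : Type u₂} [Category.{v₁} C] [Category.{v₂} D]
    (S : C ⥤ D) (T : D ⥤ C) (adj : S ⊣ T) :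
    (S.Separable ↔ ∃ ζ' : (S ⋙ T) ⟶ 𝟭 C,
        ∀ X : C, adj.unit.app X ≫ ζ'.app X = 𝟙 X) ∧
    (T.Separable ↔ ∃ ξ' : 𝟭 D ⟶ (T ⋙ S),
        ∀ Y : D, ξ'.app Y ≫ adj.counit.app Y = 𝟙 Y) :=
  ⟨adj.separable_left_iff, adj.separable_right_iff⟩
end

section
/- A separable functor between abelian categories that preserves monomorphisms reflects injective objects: if F : C → D is separable and a monofunctor, and F(Q) is injective in D, then Q is injective in C. Dually, a separable epifunctor reflects projective objects. -/
/-! A separable functor lifts factorizations: if `F.map f ≫ h = F.map g`, then (SF2) applied to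
the square `F.map g ≫ F.map (𝟙 Q) = F.map f ≫ h`, together with (SF1), gives `f ≫ Φ h = g`.
For a monomorphism `f`, `F.map f` is again a monomorphism, so injectivity of `F.obj Q` supplies
`h`, and `Φ h` extends `g` along `f`. Projectives are dual. -/

open CategoryTheory

universe v₁ v₂ u₁ u₂

namespace CategoryTheory.Functor.Separable

variable {C : Type u₁} {D : Type u₂} [Category.{v₁} C] [Category.{v₂} D] {F : C ⥤ D}

theorem exists_extension_of_map (hF : F.Separable) {X Y Q : C} {g : X ⟶ Q} {f : X ⟶ Y}
    {h : F.obj Y ⟶ F.obj Q} (hh : F.map f ≫ h = F.map g) : ∃ k : Y ⟶ Q, f ≫ k = g := by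
  obtain ⟨Φ, hΦ_map, hΦ_square⟩ := hF
  refine ⟨Φ h, ?_⟩
  have := hΦ_square f (𝟙 Q) (F.map g) h (by rw [F.map_id, Category.comp_id, hh])
  rwa [hΦ_map, Category.comp_id, eq_comm] at this

theorem exists_lift_of_map (hF : F.Separable) {X Y Q : C} {f : Q ⟶ Y} {e : X ⟶ Y}
    {h : F.obj Q ⟶ F.obj X} (hh : h ≫ F.map e = F.map f) : ∃ k : Q ⟶ X, k ≫ e = f := by
  obtain ⟨Φ, hΦ_map, hΦ_square⟩ := hF
  refine ⟨Φ h, ?_⟩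
  have := hΦ_square (𝟙 Q) e h (F.map f) (by rw [F.map_id, Category.id_comp, hh])
  rwa [hΦ_map, Category.id_comp] at this

theorem injective_of_map_injective (hF : F.Separable) [F.PreservesMonomorphisms] {Q : C}
    (hQ : Injective (F.obj Q)) : Injective Q where
  factors g f _ :=
    let ⟨_, hh⟩ := hQ.factors (F.map g) (F.map f)
    hF.exists_extension_of_map hh

theorem projective_of_map_projective (hF : F.Separable) [F.PreservesEpimorphisms] {Q : C}
    (hQ : Projective (F.obj Q)) : Projective Q where
  factors f e _ :=
    let ⟨_, hh⟩ := hQ.factors (F.map f) (F.map e)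
    hF.exists_lift_of_map hh

end CategoryTheory.Functor.Separable

theorem separable_functor_reflects_injectives_and_projectives_general
    {C : Type u₁} {D : Type u₂} [Category.{v₁} C] [Category.{v₂} D]
    (F : C ⥤ D) (hF : F.Separable) :
    (∀ Q : C, F.PreservesMonomorphisms → Injective (F.obj Q) → Injective Q) ∧
    (∀ Q : C, F.PreservesEpimorphisms → Projective (F.obj Q) → Projective Q) :=
  ⟨fun _ _ hQ => hF.injective_of_map_injective hQ,
    fun _ _ hQ => hF.projective_of_map_projective hQ⟩

/-- A separable functor between abelian categories which preserves
monomorphisms reflects injective objects; dually, a separable functor which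
preserves epimorphisms reflects projective objects. -/
theorem separable_functor_reflects_injectives_and_projectives
    {C : Type u₁} {D : Type u₂} [Category.{v₁} C] [Category.{v₂} D]
    [Abelian C] [Abelian D] (F : C ⥤ D) (hF : F.Separable) :
    (∀ Q : C, F.PreservesMonomorphisms → Injective (F.obj Q) → Injective Q) ∧
    (∀ Q : C, F.PreservesEpimorphisms → Projective (F.obj Q) → Projective Q) :=
  separable_functor_reflects_injectives_and_projectives_general F hF
end
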